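/- arXiv:1801.02125 — 3 statements merged into one kernel-verified Lean document; each statement's English description precedes it below -/
import Mathlib

section
/- Let γ ∈ ℝ^K be nonzero, c > 0, c₀ > 0, μ₁ := c/(c‖γ‖² + c₀), F := I − μ₁γγᵀ, and G := cF² + c₀μ₁²γγᵀ. Then G is a symmetric positive definite matrix. -/
/-!
Both summands of `G` are positive semidefinite: `c F²` because `F` is symmetric, and
`c₀ μ₁² γγᵀ` trivially. A vector killed by both satisfies `F x = 0` and `μ₁ (γ ⬝ᵥ x) = 0`;
the latter says `F x = x - μ₁ (γ ⬝ᵥ x) γ = x`, so `x = 0`.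
-/

open Matrix

open scoped ComplexOrder in
theorem Matrix.PosSemidef.posDef_add {𝕜 n : Type*} [RCLike 𝕜] [Fintype n]
    {A B : Matrix n n 𝕜} (hA : A.PosSemidef) (hB : B.PosSemidef)
    (hker : ∀ x, A *ᵥ x = 0 → B *ᵥ x = 0 → x = 0) : (A + B).PosDef := by
  refine posDef_iff_dotProduct_mulVec.mpr ⟨hA.1.add hB.1, fun x hx => ?_⟩
  have hqA := hA.dotProduct_mulVec_nonneg x
  have hqB := hB.dotProduct_mulVec_nonneg x
  rw [add_mulVec, dotProduct_add]
  refine lt_of_le_of_ne (add_nonneg hqA hqB) fun hsum => hx ?_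
  obtain ⟨hqA₀, hqB₀⟩ := (add_eq_zero_iff_of_nonneg hqA hqB).mp hsum.symm
  exact hker x ((hA.dotProduct_mulVec_zero_iff x).mp hqA₀)
    ((hB.dotProduct_mulVec_zero_iff x).mp hqB₀)

theorem posDef_smul_mul_self_add_smul_vecMulVec {ι : Type*} [Fintype ι] [DecidableEq ι]
    (γ : ι → ℝ) {c c₀ : ℝ} (hc : 0 < c) (hc₀ : 0 < c₀) (μ : ℝ) :
    (c • ((1 - μ • vecMulVec γ γ) * (1 - μ • vecMulVec γ γ)) +
      (c₀ * μ ^ 2) • vecMulVec γ γ).PosDef := by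
  set P := vecMulVec γ γ
  set F := 1 - μ • P
  have hP : P.PosSemidef := by simpa using posSemidef_vecMulVec_self_star γ
  have hFF : F * F = Fᴴ * F := by
    rw [(isHermitian_one.sub (hP.1.smul (IsSelfAdjoint.all μ))).eq]
  have hB : ((c₀ * μ ^ 2) • P).PosSemidef := hP.smul (by positivity)
  refine PosSemidef.posDef_add ?_ hB fun x hAx hBx => ?_
  · exact hFF ▸ (posSemidef_conjTranspose_mul_self F).smul hc.le
  · rw [smul_mulVec, smul_eq_zero_iff_right hc.ne', hFF,
      conjTranspose_mul_self_mulVec_eq_zero] at hAx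
    have hμPx : μ • (P *ᵥ x) = 0 := by
      rw [smul_mulVec, smul_eq_zero] at hBx
      simpa [hc₀.ne'] using hBx
    rwa [sub_mulVec, one_mulVec, smul_mulVec, hμPx, sub_zero] at hAx

theorem stmt_1_general (K : ℕ) (γ : Fin K → ℝ)
    (c c₀ : ℝ) (hc : 0 < c) (hc₀ : 0 < c₀)
    (μ₁ : ℝ)
    (F G : Matrix (Fin K) (Fin K) ℝ)
    (hF : F = 1 - μ₁ • vecMulVec γ γ)
    (hG : G = c • (F * F) + (c₀ * μ₁ ^ 2) • vecMulVec γ γ) :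
    G.PosDef := by
  subst hF hG
  exact posDef_smul_mul_self_add_smul_vecMulVec γ hc hc₀ μ₁

theorem stmt_1 (K : ℕ) (hK : 0 < K) (γ : Fin K → ℝ) (hγ : γ ≠ 0)
    (c c₀ : ℝ) (hc : 0 < c) (hc₀ : 0 < c₀)
    (μ₁ : ℝ) (hμ₁ : μ₁ = c / (c * (γ ⬝ᵥ γ) + c₀))
    (F G : Matrix (Fin K) (Fin K) ℝ)
    (hF : F = 1 - μ₁ • vecMulVec γ γ)
    (hG : G = c • (F * F) + (c₀ * μ₁ ^ 2) • vecMulVec γ γ) :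
    G.PosDef :=
  stmt_1_general K γ c c₀ hc hc₀ μ₁ F G hF hG
end

section
/- Let W ∈ ℝ^{n×n} be symmetric positive definite and A ∈ ℝ^{n×n} symmetric positive semidefinite with A ≠ 0. Define f(δ) := tr(A (W⁻¹ + δA)⁻¹) for δ in the interval where W⁻¹ + δA is positive definite. Then f is continuous and strictly decreasing on this interval, tends to +∞ as δ approaches the left endpoint of the interval, and tends to 0 as δ → +∞; hence for every target value ρ > 0 the equation f(δ) = ρ has a unique solution. -/
/-!
Simultaneously diagonalise: with `R = W^{-1/2}` and the spectral decomposition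
`R⁻¹ A R⁻¹ = U diag(d) Uᵀ`, the invertible `V = R U` gives `W⁻¹ = V Vᵀ` and
`A = V diag(d) Vᵀ` with `d ≥ 0`, `d ≠ 0`. Then `W⁻¹ + δ A = V diag(1 + δ dᵢ) Vᵀ`, so the
domain is `δ > -1 / max d` and `f δ = ∑ dᵢ / (1 + δ dᵢ)`: every term is nonincreasing and
tends to `0` at `+∞`, while the term with the largest `dᵢ` is strictly decreasing and blows up
at the endpoint. The intermediate value theorem then gives the unique solution.
-/

open Matrix Filter Topology Set

namespace Matrix

variable {ι : Type*} [Fintype ι] [DecidableEq ι]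

theorem PosDef.exists_simultaneous_diagonalization
    {P A : Matrix ι ι ℝ} (hP : P.PosDef) (hA : A.PosSemidef) :
    ∃ (V : Matrix ι ι ℝ) (d : ι → ℝ), IsUnit V ∧ 0 ≤ d ∧
      P = V * star V ∧ A = V * diagonal d * star V := by
  open scoped MatrixOrder in
  obtain ⟨R, hRherm, hRR, hRunit⟩ : ∃ R : Matrix ι ι ℝ, Rᴴ = R ∧ R * R = P ∧ IsUnit R :=
    ⟨CFC.sqrt P, (CFC.sqrt_nonneg P).posSemidef.1, CFC.sqrt_mul_sqrt_self P hP.posSemidef.nonneg,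
      (CFC.isUnit_sqrt_iff P hP.posSemidef.nonneg).2 hP.isUnit⟩
  have hR : IsUnit R.det := (isUnit_iff_isUnit_det R).1 hRunit
  have hM : (R⁻¹ * A * R⁻¹).PosSemidef := by
    have := hA.mul_mul_conjTranspose_same R⁻¹
    rwa [conjTranspose_nonsing_inv, hRherm] at this
  set U : Matrix ι ι ℝ := (hM.1.eigenvectorUnitary : Matrix ι ι ℝ)
  have hUU : U * star U = 1 := Unitary.coe_mul_star_self _
  have hspec : R⁻¹ * A * R⁻¹ = U * diagonal hM.1.eigenvalues * star U := by
    simpa only [Unitary.conjStarAlgAut_apply, RCLike.ofReal_real_eq_id, Function.id_comp] using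
      hM.1.spectral_theorem
  refine ⟨R * U, hM.1.eigenvalues, hRunit.mul Unitary.isUnit_coe, hM.eigenvalues_nonneg, ?_, ?_⟩
  · rw [star_mul, star_eq_conjTranspose R, hRherm, ← hRR,
      show R * U * (star U * R) = R * (U * star U) * R by noncomm_ring, hUU, mul_one]
  · calc A = R * R⁻¹ * A * (R⁻¹ * R) := by
          rw [mul_nonsing_inv R hR, nonsing_inv_mul R hR, one_mul, mul_one]
      _ = R * (R⁻¹ * A * R⁻¹) * R := by noncomm_ring
      _ = R * (U * diagonal hM.1.eigenvalues * star U) * R := congrArg (R * · * R) hspec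
      _ = R * U * diagonal hM.1.eigenvalues * star (R * U) := by
          rw [star_mul, star_eq_conjTranspose R, hRherm]; noncomm_ring

theorem mul_add_smul_mul_diagonal_mul {R : Type*} [CommSemiring R] (V B : Matrix ι ι R)
    (d : ι → R) (δ : R) :
    V * B + δ • (V * diagonal d * B) = V * diagonal (fun i => 1 + δ * d i) * B := by
  have : diagonal (fun i => 1 + δ * d i) = 1 + δ • diagonal d := by
    rw [← diagonal_one, ← diagonal_smul, ← diagonal_add]; rfl
  rw [this, mul_add, add_mul, mul_one, mul_smul_comm, smul_mul_assoc]

theorem trace_mul_diagonal_mul_mul_inv {K : Type*} [Field K] {V B : Matrix ι ι K}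
    (hV : IsUnit V) (hB : IsUnit B) (d : ι → K) {e : ι → K} (he : ∀ i, e i ≠ 0) :
    trace (V * diagonal d * B * (V * diagonal e * B)⁻¹) = ∑ i, d i / e i := by
  have hV' := (isUnit_iff_isUnit_det V).1 hV
  have hB' := (isUnit_iff_isUnit_det B).1 hB
  have he' : (diagonal e)⁻¹ = diagonal e⁻¹ := inv_eq_left_inv <| by
    rw [diagonal_mul_diagonal, ← diagonal_one]
    exact congrArg _ (funext fun i => inv_mul_cancel₀ (he i))
  rw [mul_inv_rev, mul_inv_rev, he', mul_assoc _ B, mul_nonsing_inv_cancel_left B _ hB',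
    ← mul_assoc, trace_mul_comm, ← mul_assoc, ← mul_assoc, nonsing_inv_mul _ hV', one_mul,
    diagonal_mul_diagonal, trace_diagonal]
  simp only [Pi.inv_apply, div_eq_mul_inv]

end Matrix

section
variable {ι : Type*} {d : ι → ℝ} {i₀ : ι}

theorem forall_one_add_mul_pos_iff (hd : 0 ≤ d) (hmax : ∀ i, d i ≤ d i₀) (hpos : 0 < d i₀)
    (δ : ℝ) : (∀ i, 0 < 1 + δ * d i) ↔ -(d i₀)⁻¹ < δ := by
  have hendpoint : -(d i₀)⁻¹ < δ ↔ 0 < 1 + δ * d i₀ := by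
    rw [neg_lt_iff_pos_add', ← mul_lt_mul_iff_of_pos_right hpos]
    field_simp
    ring_nf
  rw [hendpoint]
  refine ⟨fun h => h i₀, fun h i => ?_⟩
  rcases le_or_gt 0 δ with hδ | hδ
  · nlinarith [mul_nonneg hδ (hd i)]
  · nlinarith [mul_le_mul_of_nonpos_left (hmax i) hδ.le]

variable [Fintype ι]

theorem continuousOn_sum_div_one_add_mul (hd : 0 ≤ d) (hmax : ∀ i, d i ≤ d i₀)
    (hpos : 0 < d i₀) :
    ContinuousOn (fun δ => ∑ i, d i / (1 + δ * d i)) (Ioi (-(d i₀)⁻¹)) :=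
  continuousOn_finsetSum _ fun i _ => continuousOn_const.div (by fun_prop) fun δ hδ =>
    ((forall_one_add_mul_pos_iff hd hmax hpos δ).2 hδ i).ne'

theorem strictAntiOn_sum_div_one_add_mul (hd : 0 ≤ d) (hmax : ∀ i, d i ≤ d i₀)
    (hpos : 0 < d i₀) :
    StrictAntiOn (fun δ => ∑ i, d i / (1 + δ * d i)) (Ioi (-(d i₀)⁻¹)) := by
  intro a ha b hb hab
  have ha' := (forall_one_add_mul_pos_iff hd hmax hpos a).2 ha
  exact Finset.sum_lt_sum
    (fun i _ => div_le_div_of_nonneg_left (hd i) (ha' i)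
      (by nlinarith [mul_le_mul_of_nonneg_right hab.le (hd i)]))
    ⟨i₀, Finset.mem_univ _,
      div_lt_div_of_pos_left hpos (ha' i₀) (by nlinarith [mul_lt_mul_of_pos_right hab hpos])⟩

theorem tendsto_sum_div_one_add_mul_nhdsGT (hd : 0 ≤ d) (hmax : ∀ i, d i ≤ d i₀)
    (hpos : 0 < d i₀) :
    Tendsto (fun δ => ∑ i, d i / (1 + δ * d i)) (𝓝[>] (-(d i₀)⁻¹)) atTop := by
  have hden : Tendsto (fun δ => 1 + δ * d i₀) (𝓝[>] (-(d i₀)⁻¹)) (𝓝[>] 0) := by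
    refine tendsto_nhdsWithin_of_tendsto_nhds_of_eventually_within _ ?_ ?_
    · refine ((by fun_prop : Continuous fun δ : ℝ => 1 + δ * d i₀).tendsto' _ _ ?_).mono_left
        nhdsWithin_le_nhds
      field_simp
      ring
    · filter_upwards [self_mem_nhdsWithin] with δ hδ
      exact (forall_one_add_mul_pos_iff hd hmax hpos δ).2 hδ i₀
  refine tendsto_atTop_mono' _ ?_ ((hden.inv_tendsto_nhdsGT_zero).const_mul_atTop hpos)
  filter_upwards [self_mem_nhdsWithin] with δ hδ
  have hδ' := (forall_one_add_mul_pos_iff hd hmax hpos δ).2 hδ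
  show d i₀ / (1 + δ * d i₀) ≤ _
  exact Finset.single_le_sum (f := fun i => d i / (1 + δ * d i))
    (fun i _ => div_nonneg (hd i) (hδ' i).le) (Finset.mem_univ i₀)

theorem tendsto_sum_div_one_add_mul_atTop (hd : 0 ≤ d) :
    Tendsto (fun δ => ∑ i, d i / (1 + δ * d i)) atTop (𝓝 0) := by
  have hterm (i : ι) : Tendsto (fun δ => d i / (1 + δ * d i)) atTop (𝓝 0) := by
    rcases (hd i).eq_or_lt with hi | hi
    · simp [← hi]
    · exact tendsto_const_nhds.div_atTop
        (tendsto_atTop_add_const_left _ 1 (tendsto_id.atTop_mul_const hi))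
  simpa using tendsto_finsetSum Finset.univ fun i _ => hterm i

end

theorem existsUnique_eq_of_strictAntiOn_Ioi {α : Type*} [ConditionallyCompleteLinearOrder α]
    [TopologicalSpace α] [OrderTopology α] [DenselyOrdered α] [NoMaxOrder α]
    {g : α → ℝ} {a : α} {b ρ : ℝ} (hcont : ContinuousOn g (Ioi a))
    (hanti : StrictAntiOn g (Ioi a)) (hleft : Tendsto g (𝓝[>] a) atTop)
    (hright : Tendsto g atTop (𝓝 b)) (hρ : b < ρ) : ∃! δ, δ ∈ Ioi a ∧ g δ = ρ := by
  obtain ⟨x, hxρ, hx⟩ := ((hleft.eventually_ge_atTop ρ).and self_mem_nhdsWithin).exists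
  obtain ⟨y, hyρ, hy⟩ := ((hright.eventually_lt_const hρ).and (Ioi_mem_atTop a)).exists
  obtain ⟨δ, hδ, hδρ⟩ := hcont.surjOn_uIcc hx hy (mem_uIcc.2 (Or.inr ⟨hyρ.le, hxρ⟩))
  exact ⟨δ, ⟨hδ, hδρ⟩, fun z hz => hanti.injOn hz.1 hδ (hz.2.trans hδρ.symm)⟩

theorem stmt_10_general (n : ℕ)
    (W A : Matrix (Fin n) (Fin n) ℝ)
    (hW : W.PosDef) (hA : A.PosSemidef) (hA0 : A ≠ 0)
    (S : Set ℝ) (hS : S = {δ : ℝ | (W⁻¹ + δ • A).PosDef})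
    (f : ℝ → ℝ) (hf : ∀ δ, f δ = (A * (W⁻¹ + δ • A)⁻¹).trace) :
    ContinuousOn f S ∧ StrictAntiOn f S ∧
    Tendsto f (𝓝[>] (sInf S)) atTop ∧
    Tendsto f atTop (𝓝 0) ∧
    ∀ ρ : ℝ, 0 < ρ → ∃! δ : ℝ, δ ∈ S ∧ f δ = ρ := by
  obtain ⟨V, d, hV, hd, hWV, hAV⟩ :=
    hW.inv.exists_simultaneous_diagonalization hA
  obtain ⟨i, hi⟩ : ∃ i, d i ≠ 0 := by
    by_contra! h
    exact hA0 (by simp [hAV, funext h])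
  have : Nonempty (Fin n) := ⟨i⟩
  obtain ⟨i₀, hmax⟩ := Finite.exists_max d
  have hpos : 0 < d i₀ := ((hd i).lt_of_ne' hi).trans_le (hmax i)
  have hres (δ : ℝ) : W⁻¹ + δ • A = V * diagonal (fun i => 1 + δ * d i) * star V := by
    rw [hWV, hAV, mul_add_smul_mul_diagonal_mul]
  obtain rfl : S = Ioi (-(d i₀)⁻¹) := by
    ext δ
    rw [hS, mem_ofPred_eq, hres, IsUnit.posDef_star_right_conjugate_iff hV, posDef_diagonal_iff,
      forall_one_add_mul_pos_iff hd hmax hpos, mem_Ioi]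
  have hfg : EqOn (fun δ => ∑ i, d i / (1 + δ * d i)) f (Ioi (-(d i₀)⁻¹)) := fun δ hδ => by
    have hδ' := (forall_one_add_mul_pos_iff hd hmax hpos δ).2 hδ
    rw [hf, hres, hAV, trace_mul_diagonal_mul_mul_inv hV hV.star _ fun i => (hδ' i).ne']
  have hcont := (continuousOn_sum_div_one_add_mul hd hmax hpos).congr hfg.symm
  have hanti := (strictAntiOn_sum_div_one_add_mul hd hmax hpos).congr hfg
  have hleft : Tendsto f (𝓝[>] (-(d i₀)⁻¹)) atTop :=
    (tendsto_sum_div_one_add_mul_nhdsGT hd hmax hpos).congr'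
      (hfg.eventuallyEq_of_mem self_mem_nhdsWithin)
  have hright : Tendsto f atTop (𝓝 0) :=
    (tendsto_sum_div_one_add_mul_atTop hd).congr' (hfg.eventuallyEq_of_mem (Ioi_mem_atTop _))
  rw [csInf_Ioi]
  exact ⟨hcont, hanti, hleft, hright, fun ρ hρ =>
    existsUnique_eq_of_strictAntiOn_Ioi hcont hanti hleft hright hρ⟩

theorem stmt_10 (n : ℕ) (hn : 0 < n)
    (W A : Matrix (Fin n) (Fin n) ℝ)
    (hW : W.PosDef) (hA : A.PosSemidef) (hA0 : A ≠ 0)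
    (S : Set ℝ) (hS : S = {δ : ℝ | (W⁻¹ + δ • A).PosDef})
    (f : ℝ → ℝ) (hf : ∀ δ, f δ = (A * (W⁻¹ + δ • A)⁻¹).trace) :
    ContinuousOn f S ∧ StrictAntiOn f S ∧
    Tendsto f (𝓝[>] (sInf S)) atTop ∧
    Tendsto f atTop (𝓝 0) ∧
    ∀ ρ : ℝ, 0 < ρ → ∃! δ : ℝ, δ ∈ S ∧ f δ = ρ :=
  stmt_10_general n W A hW hA hA0 S hS f hf
end

section
/- Let γ ∈ ℝ^K be nonzero, c > 0, c₀ > 0, μ₀ ∈ ℝ. Define μ₁ := c/(c‖γ‖² + c₀), μ₂ := c₀μ₀/(c‖γ‖² + c₀), μ₃ := μ₁²(c₀/c + ‖γ‖²) − 2μ₁, G := c(I + μ₃γγᵀ), ξ₀ := (cμ₂ + (c₀μ₁μ₀ − cμ₂)μ₁‖γ‖²) G⁻¹γ, B := (1/2)⟨Gξ₀, ξ₀⟩ − (1/2)cμ₂²‖γ‖² − (1/2)c₀μ₁²μ₀²‖γ‖⁴, and Loss(ξ) := min_{b₀∈ℝ} [(c₀/2)(b₀ − μ₀)² + (c/2)‖ξ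 − b₀γ‖²]. Then for all ξ ∈ ℝ^K, Loss(ξ) + B = (1/2)⟨G(ξ − ξ₀), ξ − ξ₀⟩. -/
/-!
Since `μ₃ = -μ₁`, we have `G = c (I - μ₁ γγᵀ)`, and the rank-one (Sherman–Morrison) inverse
`G⁻¹ = c⁻¹ (I + (c / c₀) γγᵀ)` shows that `γ` is an eigenvector of `G⁻¹`; this collapses the
definitions to `ξ₀ = μ₀ γ` and `B = 0`. Completing the square in `b₀` evaluates `Loss ξ` in closed
form, and that closed form is `½ ⟨G (ξ - μ₀ γ), ξ - μ₀ γ⟩` expanded.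
-/

open Matrix

section RankOne

variable {n 𝕜 : Type*} [Fintype n] [DecidableEq n] [Field 𝕜]

theorem one_add_smul_vecMulVec_mul_one_add_smul_vecMulVec {a b : 𝕜} (u v : n → 𝕜)
    (h : a + b + a * b * (v ⬝ᵥ u) = 0) :
    (1 + a • vecMulVec u v) * (1 + b • vecMulVec u v) = 1 := by
  have hsq : vecMulVec u v * vecMulVec u v = (v ⬝ᵥ u) • vecMulVec u v := by
    rw [vecMulVec_mul_vecMulVec, vecMulVec_smul]
  calc (1 + a • vecMulVec u v) * (1 + b • vecMulVec u v)
      = 1 + (a + b + a * b * (v ⬝ᵥ u)) • vecMulVec u v := by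
        simp only [add_mul, mul_add, Matrix.one_mul, Matrix.mul_one, Matrix.smul_mul,
          Matrix.mul_smul, hsq, smul_smul, add_smul]
        module
    _ = 1 := by rw [h, zero_smul, add_zero]

theorem inv_smul_one_add_smul_vecMulVec {c a b : 𝕜} (hc : c ≠ 0) (u v : n → 𝕜)
    (h : a + b + a * b * (v ⬝ᵥ u) = 0) :
    (c • (1 + a • vecMulVec u v))⁻¹ = c⁻¹ • (1 + b • vecMulVec u v) :=
  inv_eq_right_inv <| by
    rw [Matrix.smul_mul, Matrix.mul_smul, smul_smul, mul_inv_cancel₀ hc, one_smul,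
      one_add_smul_vecMulVec_mul_one_add_smul_vecMulVec u v h]

end RankOne

theorem smul_one_add_smul_vecMulVec_mulVec_dotProduct {n R : Type*} [Fintype n] [DecidableEq n]
    [CommRing R] (c a : R) (u x : n → R) :
    (c • (1 + a • vecMulVec u u)) *ᵥ x ⬝ᵥ x = c * (x ⬝ᵥ x + a * (u ⬝ᵥ x) ^ 2) := by
  simp only [smul_mulVec, add_mulVec, one_mulVec, vecMulVec_mulVec, op_smul_eq_smul,
    smul_dotProduct, add_dotProduct, smul_eq_mul]
  ring

theorem ciInf_add_mul_sq_sub {m a t : ℝ} (ha : 0 ≤ a) : ⨅ b : ℝ, (m + a * (b - t) ^ 2) = m := by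
  have hge : ∀ b : ℝ, m ≤ m + a * (b - t) ^ 2 := fun b => by
    have := mul_nonneg ha (sq_nonneg (b - t)); linarith
  refine le_antisymm ?_ (le_ciInf hge)
  simpa using ciInf_le ⟨m, Set.forall_mem_range.2 hge⟩ t

theorem iInf_sq_add_sq_dist_smul {n : Type*} [Fintype n] {c c₀ : ℝ} (μ₀ : ℝ) (γ ξ : n → ℝ)
    (hD : 0 < c * (γ ⬝ᵥ γ) + c₀) :
    ⨅ b : ℝ, (c₀ / 2 * (b - μ₀) ^ 2 + c / 2 * ((ξ - b • γ) ⬝ᵥ (ξ - b • γ))) =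
      c₀ * μ₀ ^ 2 / 2 + c * (ξ ⬝ᵥ ξ) / 2
        - (c₀ * μ₀ + c * (ξ ⬝ᵥ γ)) ^ 2 / (2 * (c * (γ ⬝ᵥ γ) + c₀)) := by
  set D := c * (γ ⬝ᵥ γ) + c₀
  have hsq : ∀ b : ℝ, c₀ / 2 * (b - μ₀) ^ 2 + c / 2 * ((ξ - b • γ) ⬝ᵥ (ξ - b • γ)) =
      (c₀ * μ₀ ^ 2 / 2 + c * (ξ ⬝ᵥ ξ) / 2 - (c₀ * μ₀ + c * (ξ ⬝ᵥ γ)) ^ 2 / (2 * D))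
        + D / 2 * (b - (c₀ * μ₀ + c * (ξ ⬝ᵥ γ)) / D) ^ 2 := fun b => by
    simp only [sub_dotProduct, dotProduct_sub, smul_dotProduct, dotProduct_smul, smul_eq_mul,
      dotProduct_comm γ ξ]
    field_simp
    ring
  simp only [hsq]
  exact ciInf_add_mul_sq_sub (by positivity)

theorem stmt_16_general (K : ℕ) (γ : Fin K → ℝ)
    (c c₀ μ₀ : ℝ) (hc : 0 < c) (hc₀ : 0 < c₀)
    (μ₁ μ₂ μ₃ : ℝ)
    (hμ₁ : μ₁ = c / (c * (γ ⬝ᵥ γ) + c₀))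
    (hμ₂ : μ₂ = c₀ * μ₀ / (c * (γ ⬝ᵥ γ) + c₀))
    (hμ₃ : μ₃ = μ₁ ^ 2 * (c₀ / c + γ ⬝ᵥ γ) - 2 * μ₁)
    (G : Matrix (Fin K) (Fin K) ℝ)
    (hG : G = c • ((1 : Matrix (Fin K) (Fin K) ℝ) + μ₃ • vecMulVec γ γ))
    (ξ₀ : Fin K → ℝ)
    (hξ₀ : ξ₀ = (c * μ₂ + (c₀ * μ₁ * μ₀ - c * μ₂) * μ₁ * (γ ⬝ᵥ γ)) • G⁻¹.mulVec γ)
    (B : ℝ)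
    (hB : B = 1 / 2 * (G.mulVec ξ₀ ⬝ᵥ ξ₀) - 1 / 2 * c * μ₂ ^ 2 * (γ ⬝ᵥ γ)
        - 1 / 2 * c₀ * μ₁ ^ 2 * μ₀ ^ 2 * (γ ⬝ᵥ γ) ^ 2)
    (Loss : (Fin K → ℝ) → ℝ)
    (hLoss : ∀ ξ, Loss ξ = ⨅ b₀ : ℝ,
        (c₀ / 2 * (b₀ - μ₀) ^ 2 + c / 2 * ((ξ - b₀ • γ) ⬝ᵥ (ξ - b₀ • γ)))) :
    ∀ ξ : Fin K → ℝ, Loss ξ + B = 1 / 2 * (G.mulVec (ξ - ξ₀) ⬝ᵥ (ξ - ξ₀)) := by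
  intro ξ
  have hD : 0 < c * (γ ⬝ᵥ γ) + c₀ := by
    have : 0 ≤ γ ⬝ᵥ γ := Finset.sum_nonneg fun i _ => mul_self_nonneg (γ i)
    positivity
  have hμ₃_eq : μ₃ = -μ₁ := by
    rw [hμ₃, hμ₁]; field_simp; ring
  have hGinv : G⁻¹ = c⁻¹ • (1 + (c / c₀) • vecMulVec γ γ) := by
    rw [hG]
    refine inv_smul_one_add_smul_vecMulVec hc.ne' γ γ ?_
    rw [hμ₃_eq, hμ₁]; field_simp; ring
  have hGinvγ : G⁻¹ *ᵥ γ = (c⁻¹ * (1 + c / c₀ * (γ ⬝ᵥ γ))) • γ := by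
    rw [hGinv, smul_mulVec, add_mulVec, one_mulVec, smul_mulVec, vecMulVec_mulVec,
      op_smul_eq_smul]
    module
  have hξ₀_eq : ξ₀ = μ₀ • γ := by
    rw [hξ₀, hGinvγ, smul_smul, hμ₁, hμ₂]
    congr 1
    field_simp
    ring
  have hB_eq : B = 0 := by
    rw [hB, hG, smul_one_add_smul_vecMulVec_mulVec_dotProduct, hξ₀_eq, hμ₃_eq, hμ₁, hμ₂]
    simp only [smul_dotProduct, dotProduct_smul, smul_eq_mul]
    field_simp
    ring
  rw [hLoss, iInf_sq_add_sq_dist_smul μ₀ γ ξ hD, hB_eq, add_zero, hG,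
    smul_one_add_smul_vecMulVec_mulVec_dotProduct, hξ₀_eq, hμ₃_eq, hμ₁]
  simp only [sub_dotProduct, dotProduct_sub, smul_dotProduct, dotProduct_smul, smul_eq_mul,
    dotProduct_comm γ ξ]
  field_simp
  ring

theorem stmt_16 (K : ℕ) (hK : 0 < K) (γ : Fin K → ℝ) (hγ : γ ≠ 0)
    (c c₀ μ₀ : ℝ) (hc : 0 < c) (hc₀ : 0 < c₀)
    (μ₁ μ₂ μ₃ : ℝ)
    (hμ₁ : μ₁ = c / (c * (γ ⬝ᵥ γ) + c₀))
    (hμ₂ : μ₂ = c₀ * μ₀ / (c * (γ ⬝ᵥ γ) + c₀))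
    (hμ₃ : μ₃ = μ₁ ^ 2 * (c₀ / c + γ ⬝ᵥ γ) - 2 * μ₁)
    (G : Matrix (Fin K) (Fin K) ℝ)
    (hG : G = c • ((1 : Matrix (Fin K) (Fin K) ℝ) + μ₃ • vecMulVec γ γ))
    (ξ₀ : Fin K → ℝ)
    (hξ₀ : ξ₀ = (c * μ₂ + (c₀ * μ₁ * μ₀ - c * μ₂) * μ₁ * (γ ⬝ᵥ γ)) • G⁻¹.mulVec γ)
    (B : ℝ)
    (hB : B = 1 / 2 * (G.mulVec ξ₀ ⬝ᵥ ξ₀) - 1 / 2 * c * μ₂ ^ 2 * (γ ⬝ᵥ γ)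
        - 1 / 2 * c₀ * μ₁ ^ 2 * μ₀ ^ 2 * (γ ⬝ᵥ γ) ^ 2)
    (Loss : (Fin K → ℝ) → ℝ)
    (hLoss : ∀ ξ, Loss ξ = ⨅ b₀ : ℝ,
        (c₀ / 2 * (b₀ - μ₀) ^ 2 + c / 2 * ((ξ - b₀ • γ) ⬝ᵥ (ξ - b₀ • γ)))) :
    ∀ ξ : Fin K → ℝ, Loss ξ + B = 1 / 2 * (G.mulVec (ξ - ξ₀) ⬝ᵥ (ξ - ξ₀)) :=
  stmt_16_general K γ c c₀ μ₀ hc hc₀ μ₁ μ₂ μ₃ hμ₁ hμ₂ hμ₃ G hG ξ₀ hξ₀ B hB Loss hLoss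
end
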